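/- Let τ > 0, α > 0, l > 0, K = [k₁,k₂,k₃] with k₁,k₂,k₃ real, A = [[0,1,0],[0,0,1],[0,0,-1/τ]], B = [0,0,1/τ]^T, and L = α B^T. Then the characteristic polynomial of A - BK - l·B L equals (1/τ)(τ s³ + (1 + k₃ + lα/τ) s² + k₂ s + k₁). Consequently, if τ s³ + (1+k₃) s² + k₂ s + k₁ is a Hurwitz polynomial (all coefficients positive and (1+k₃)k₂ > τ k₁), then A - BK - l·B L is also Hurwitz for every l > 0. -/

import Mathlib

/-!
The closed-loop matrix is in companion form, because `B K` and `l • (B L)` only change its last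
row; so its characteristic polynomial can be read off that row, and the observer only adds
`l α / τ` to the coefficient of `s²`. That increases `a₂` and hence `a₂ a₁`, so the Routh–Hurwitz
conditions for the cubic still hold.
-/

open Matrix Polynomial

theorem charpoly_companion_fin_three {R : Type*} [CommRing R] (c₀ c₁ c₂ : R) :
    (!![0, 1, 0; 0, 0, 1; -c₀, -c₁, -c₂] : Matrix (Fin 3) (Fin 3) R).charpoly =
      X ^ 3 + C c₂ * X ^ 2 + C c₁ * X + C c₀ := by
  rw [Matrix.charpoly, Matrix.det_fin_three]
  simp
  ring

theorem closed_loop_eq_companion (τ α l k₁ k₂ k₃ : ℝ) :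
    !![0, 1, 0; 0, 0, 1; 0, 0, -1/τ] - !![0; 0; 1/τ] * !![k₁, k₂, k₃]
      - l • (!![0; 0; 1/τ] * (α • (!![0; 0; (1:ℝ)/τ])ᵀ)) =
      !![0, 1, 0; 0, 0, 1; -(k₁/τ), -(k₂/τ), -((1 + k₃ + l * α / τ) / τ)] := by
  ext i j
  fin_cases i <;> fin_cases j <;> simp [Matrix.vecMul, dotProduct] <;> ring

theorem re_neg_of_aeval_cubic_eq_zero {a₃ a₂ a₁ a₀ : ℝ} (h₃ : 0 < a₃) (h₂ : 0 < a₂)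
    (h₁ : 0 < a₁) (h₀ : 0 < a₀) (hRH : a₃ * a₀ < a₂ * a₁) {μ : ℂ}
    (hμ : aeval μ (C a₃ * X ^ 3 + C a₂ * X ^ 2 + C a₁ * X + C a₀) = 0) : μ.re < 0 := by
  obtain ⟨x, y⟩ := μ
  simp only [map_add, map_mul, aeval_C, aeval_X, Complex.coe_algebraMap, Complex.ext_iff,
    Complex.add_re, Complex.add_im, Complex.mul_re, Complex.mul_im, Complex.ofReal_re,
    Complex.ofReal_im, Complex.zero_re, Complex.zero_im, pow_succ, pow_zero, one_mul] at hμ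
  obtain ⟨hre, him⟩ := hμ
  change x < 0
  by_contra! hx
  rcases eq_or_ne y 0 with rfl | hy
  · have hreal : a₃ * x ^ 3 + a₂ * x ^ 2 + a₁ * x + a₀ = 0 := by linear_combination hre
    have : 0 ≤ a₃ * x ^ 3 + a₂ * x ^ 2 + a₁ * x := by positivity
    linarith
  · have him' : a₃ * (3 * x ^ 2 - y ^ 2) + 2 * a₂ * x + a₁ = 0 :=
      mul_left_cancel₀ hy (by linear_combination him)
    have hre' : a₃ * (x ^ 3 - 3 * x * y ^ 2) + a₂ * (x ^ 2 - y ^ 2) + a₁ * x + a₀ = 0 := by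
      linear_combination hre
    -- Eliminating `y ^ 2` leaves a cubic in `x` whose coefficients are positive by `hRH`.
    have hx_cubic : 4 * a₃ ^ 2 * x ^ 3 + 4 * a₂ * a₃ * x ^ 2 + (a₁ * a₃ + a₂ ^ 2) * x
        + (a₂ * a₁ - a₃ * a₀) / 2 = 0 := by
      linear_combination (-(a₃ / 2)) * hre' + ((3 * a₃ * x + a₂) / 2) * him'
    have : 0 ≤ 4 * a₃ ^ 2 * x ^ 3 + 4 * a₂ * a₃ * x ^ 2 + (a₁ * a₃ + a₂ ^ 2) * x := by positivity
    linarith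

theorem observer_closed_loop_Hurwitz (τ α l : ℝ) (hτ : 0 < τ) (hα : 0 < α)
    (hl : 0 < l) (k₁ k₂ k₃ : ℝ)
    (A : Matrix (Fin 3) (Fin 3) ℝ) (B : Matrix (Fin 3) (Fin 1) ℝ)
    (K L : Matrix (Fin 1) (Fin 3) ℝ)
    (hA : A = !![0, 1, 0; 0, 0, 1; 0, 0, -1/τ])
    (hB : B = !![0; 0; 1/τ])
    (hK : K = !![k₁, k₂, k₃])
    (hL : L = α • Bᵀ) :
    (A - B * K - l • (B * L)).charpoly =
      Polynomial.C (1/τ) *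
        (Polynomial.C τ * X ^ 3 + Polynomial.C (1 + k₃ + l * α / τ) * X ^ 2
          + Polynomial.C k₂ * X + Polynomial.C k₁) ∧
    ((0 < τ ∧ 0 < 1 + k₃ ∧ 0 < k₂ ∧ 0 < k₁ ∧ (1 + k₃) * k₂ > τ * k₁) →
      ∀ μ : ℂ, ((A - B * K - l • (B * L)).map (algebraMap ℝ ℂ)).charpoly.IsRoot μ →
        μ.re < 0) := by
  have hchar : (A - B * K - l • (B * L)).charpoly =
      C (1/τ) * (C τ * X ^ 3 + C (1 + k₃ + l * α / τ) * X ^ 2 + C k₂ * X + C k₁) := by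
    subst hA hB hK hL
    rw [closed_loop_eq_companion, charpoly_companion_fin_three]
    simp only [mul_add, ← mul_assoc, ← C_mul, one_div_mul_cancel hτ.ne', C_1, one_mul,
      one_div_mul_eq_div, add_div]
  refine ⟨hchar, ?_⟩
  rintro ⟨-, h₂, h₁, h₀, hRH⟩ μ hμ
  rw [charpoly_map, hchar, IsRoot.def, eval_map_algebraMap, map_mul, aeval_C,
    mul_eq_zero] at hμ
  refine re_neg_of_aeval_cubic_eq_zero hτ (by positivity) h₁ h₀ ?_
    (hμ.resolve_left (by simp [hτ.ne']))
  have : 0 < l * α / τ * k₂ := by positivity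
  linarith [add_mul (1 + k₃) (l * α / τ) k₂]
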